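/- arXiv:0902.0547 — 4 statements merged into one kernel-verified Lean document; each statement's English description precedes it below -/
import Mathlib

section
/- The interval algebra I(B) of a Boolean algebra B satisfies the cubic implication algebra axiom: if x ≤ y in I(B) (in the inclusion order), then Δ(y, x) ∨ x = y. -/
/-- Join in the interval algebra: [a,b] ∨ [c,d] = [a ∧ c, b ∨ d]. -/
def ijoin {B : Type*} [BooleanAlgebra B] (x y : B × B) : B × B :=
  (x.1 ⊓ y.1, x.2 ⊔ y.2)

/-- Δ([a,b],[c,d]) = [a ∨ (b ∧ dᶜ), b ∧ (a ∨ cᶜ)], defined for [c,d] ⊆ [a,b]. -/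
def idelta {B : Type*} [BooleanAlgebra B] (x y : B × B) : B × B :=
  (x.1 ⊔ (x.2 ⊓ y.2ᶜ), x.2 ⊓ (x.1 ⊔ y.1ᶜ))

/-- The inclusion order on intervals: [a,b] ≤ [c,d] iff c ≤ a and b ≤ d. -/
def ile {B : Type*} [BooleanAlgebra B] (x y : B × B) : Prop :=
  y.1 ≤ x.1 ∧ x.2 ≤ y.2

theorem stmt1 {B : Type*} [BooleanAlgebra B] (x y : B × B)
    (hx : x.1 ≤ x.2) (hy : y.1 ≤ y.2) (hxy : ile x y) :
    ijoin (idelta y x) x = y := by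
  obtain ⟨h1, h2⟩ := hxy
  unfold ijoin idelta
  ext
  · show (y.1 ⊔ (y.2 ⊓ x.2ᶜ)) ⊓ x.1 = y.1
    rw [inf_sup_right]
    have : (y.2 ⊓ x.2ᶜ) ⊓ x.1 = ⊥ := by
      rw [inf_assoc]
      have : x.2ᶜ ⊓ x.1 = ⊥ := by
        rw [← le_bot_iff, ← compl_inf_self x.2]
        exact inf_le_inf_left _ hx
      simp [this]
    rw [this, sup_bot_eq, inf_eq_left.mpr (h1.trans (le_refl _))]
  · show (y.2 ⊓ (y.1 ⊔ x.1ᶜ)) ⊔ x.2 = y.2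
    apply le_antisymm
    · exact sup_le inf_le_left h2
    · have : y.2 = y.2 ⊓ (x.1ᶜ ⊔ x.1) := by simp
      nth_rewrite 1 [this]
      rw [inf_sup_left]
      apply sup_le
      · exact le_sup_of_le_left (inf_le_inf_left _ le_sup_right)
      · exact le_sup_of_le_right (inf_le_right.trans hx)
end

section
/- With σᵢ, τᵢ defined by σ₀ = s₀, τ₀ = t₀, σ_{i+1} = σᵢ ∨ (τᵢ ∧ t_{i+1}ᶜ), τ_{i+1} = σᵢ ∨ (τᵢ ∧ s_{i+1}ᶜ) in a Boolean algebra: if τ_k ≤ α then t₀ ≤ (⋁_{j=1}^{k} s_j) ∨ α. -/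
theorem stmt7 {B : Type*} [BooleanAlgebra B] (s t σ τ : ℕ → B) (k : ℕ) (α : B)
    (hst : ∀ i, s i ≤ t i)
    (hσ0 : σ 0 = s 0) (hτ0 : τ 0 = t 0)
    (hσ : ∀ i, σ (i + 1) = σ i ⊔ (τ i ⊓ (t (i + 1))ᶜ))
    (hτ : ∀ i, τ (i + 1) = σ i ⊔ (τ i ⊓ (s (i + 1))ᶜ))
    (h : τ k ≤ α) :
    t 0 ≤ (Finset.Icc 1 k).sup s ⊔ α := by
  have key : ∀ n, t 0 ≤ (Finset.Icc 1 n).sup s ⊔ τ n := by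
    intro n
    induction n with
    | zero => simp [hτ0]
    | succ n ih =>
      have h1 : τ n ≤ s (n + 1) ⊔ τ (n + 1) := by
        calc τ n = τ n ⊓ s (n + 1) ⊔ τ n ⊓ (s (n + 1))ᶜ := (by rw [← inf_sup_left, sup_compl_eq_top, inf_top_eq])
        _ ≤ s (n + 1) ⊔ τ (n + 1) :=
          sup_le_sup inf_le_right (le_trans le_sup_right (by rw [hτ n]))
      calc t 0 ≤ (Finset.Icc 1 n).sup s ⊔ τ n := ih
      _ ≤ (Finset.Icc 1 n).sup s ⊔ (s (n + 1) ⊔ τ (n + 1)) := sup_le_sup_left h1 _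
      _ ≤ (Finset.Icc 1 (n + 1)).sup s ⊔ τ (n + 1) := by
          rw [← sup_assoc]
          refine sup_le_sup_right (sup_le ?_ ?_) _
          · exact Finset.sup_mono (Finset.Icc_subset_Icc_right (Nat.le_succ n))
          · exact Finset.le_sup (by simp)
  exact le_trans (key k) (sup_le_sup_left h _)
end

section
/- With σᵢ, τᵢ defined by σ₀ = s₀, τ₀ = t₀, σ_{i+1} = σᵢ ∨ (τᵢ ∧ t_{i+1}ᶜ), τ_{i+1} = σᵢ ∨ (τᵢ ∧ s_{i+1}ᶜ): if σ_k ≤ α then s₀ ≤ α, and for every i < k, t₀ ≤ (⋁_{j=1}^{i} s_j) ∨ t_{i+1} ∨ α. -/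
private lemma aux_le {B : Type*} [BooleanAlgebra B] (a b : B) : a ≤ (a ⊓ bᶜ) ⊔ b := by
  have : (a ⊓ bᶜ) ⊔ b = a ⊔ b := by
    rw [sup_comm, sup_inf_left, sup_compl_eq_top, inf_top_eq, sup_comm]
  rw [this]; exact le_sup_left

theorem stmt8 {B : Type*} [BooleanAlgebra B] (s t σ τ : ℕ → B) (k : ℕ) (α : B)
    (hst : ∀ i, s i ≤ t i)
    (hσ0 : σ 0 = s 0) (hτ0 : τ 0 = t 0)
    (hσ : ∀ i, σ (i + 1) = σ i ⊔ (τ i ⊓ (t (i + 1))ᶜ))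
    (hτ : ∀ i, τ (i + 1) = σ i ⊔ (τ i ⊓ (s (i + 1))ᶜ))
    (h : σ k ≤ α) :
    s 0 ≤ α ∧ ∀ i < k, t 0 ≤ (Finset.Icc 1 i).sup s ⊔ t (i + 1) ⊔ α := by
  have hmono : ∀ i j, i ≤ j → σ i ≤ σ j := by
    intro i j hij
    induction j with
    | zero => simp_all
    | succ n ih =>
      rcases Nat.lt_or_ge i (n+1) with h' | h'
      · exact le_trans (ih (Nat.lt_succ_iff.mp h')) (by rw [hσ n]; exact le_sup_left)
      · have : i = n + 1 := le_antisymm hij h'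
        simp [this]
  constructor
  · calc s 0 = σ 0 := hσ0.symm
    _ ≤ σ k := hmono 0 k (Nat.zero_le k)
    _ ≤ α := h
  · -- key: τ 0 ≤ sup s ⊔ τ i
    have key : ∀ i, τ 0 ≤ (Finset.Icc 1 i).sup s ⊔ τ i := by
      intro i
      induction i with
      | zero => simp
      | succ n ih =>
        have h1 : τ n ≤ τ (n+1) ⊔ s (n+1) := by
          rw [hτ n]
          calc τ n ≤ (τ n ⊓ (s (n+1))ᶜ) ⊔ s (n+1) := aux_le _ _
          _ ≤ (σ n ⊔ (τ n ⊓ (s (n+1))ᶜ)) ⊔ s (n+1) := by gcongr; exact le_sup_right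
        have h2 : s (n+1) ≤ (Finset.Icc 1 (n+1)).sup s :=
          Finset.le_sup (by simp)
        have h3 : (Finset.Icc 1 n).sup s ≤ (Finset.Icc 1 (n+1)).sup s :=
          Finset.sup_mono (Finset.Icc_subset_Icc_right (Nat.le_succ n))
        calc τ 0 ≤ (Finset.Icc 1 n).sup s ⊔ τ n := ih
        _ ≤ (Finset.Icc 1 n).sup s ⊔ (τ (n+1) ⊔ s (n+1)) := by gcongr
        _ ≤ (Finset.Icc 1 (n+1)).sup s ⊔ τ (n+1) := by
            rw [sup_comm (τ (n+1)) (s (n+1)), ← sup_assoc]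
            gcongr
            exact sup_le h3 h2
    intro i hik
    have h4 : τ i ≤ σ (i+1) ⊔ t (i+1) := by
      rw [hσ i]
      calc τ i ≤ (τ i ⊓ (t (i+1))ᶜ) ⊔ t (i+1) := aux_le _ _
      _ ≤ (σ i ⊔ (τ i ⊓ (t (i+1))ᶜ)) ⊔ t (i+1) := by gcongr; exact le_sup_right
    have h5 : σ (i+1) ≤ α := le_trans (hmono (i+1) k hik) h
    calc t 0 = τ 0 := hτ0.symm
    _ ≤ (Finset.Icc 1 i).sup s ⊔ τ i := key i
    _ ≤ (Finset.Icc 1 i).sup s ⊔ (σ (i+1) ⊔ t (i+1)) := by gcongr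
    _ ≤ (Finset.Icc 1 i).sup s ⊔ (α ⊔ t (i+1)) := by gcongr
    _ = (Finset.Icc 1 i).sup s ⊔ t (i+1) ⊔ α := by
        rw [sup_comm α, ← sup_assoc]
end

section
/- In the interval algebra of a Boolean algebra, define ηᴶ₀ = [s_{j₀}, t_{j₀}] and η^J_{p+1} = η^J_p ∨ Δ(η^J_p ∨ [s_{j_{p+1}}, t_{j_{p+1}}], [s_{j_{p+1}}, t_{j_{p+1}}]). Then η^J_i = [ s_{j₀} ∧ ⋀_{p=1}^{i} (s_{j_p} ∨ t_{j_p}ᶜ), t_{j₀} ∨ ⋁_{p=1}^{i} (s_{j_p}ᶜ ∧ t_{j_p}) ]. -/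
private lemma aux1 {B : Type*} [BooleanAlgebra B] {A T s' t' : B} (h : A ≤ T) :
    A ⊓ ((A ⊓ s') ⊔ ((T ⊔ t') ⊓ t'ᶜ)) = A ⊓ (s' ⊔ t'ᶜ) := by
  have h1 : (T ⊔ t') ⊓ t'ᶜ = T ⊓ t'ᶜ := by
    rw [inf_sup_right, inf_compl_self, sup_bot_eq]
  rw [h1, inf_sup_left, ← inf_assoc, inf_idem, ← inf_assoc, inf_eq_left.mpr h,
    ← inf_sup_left]

private lemma aux2 {B : Type*} [BooleanAlgebra B] {A T s' t' : B} (h : A ≤ T) :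
    T ⊔ ((T ⊔ t') ⊓ ((A ⊓ s') ⊔ s'ᶜ)) = T ⊔ (s'ᶜ ⊓ t') := by
  have h1 : (A ⊓ s') ⊔ s'ᶜ = A ⊔ s'ᶜ := by
    rw [sup_inf_right, sup_compl_eq_top, inf_top_eq]
  rw [h1, sup_inf_left, ← sup_assoc, sup_idem, ← sup_assoc, sup_eq_left.mpr h,
    ← sup_inf_left, inf_comm]

/-- Here `s p` and `t p` denote the endpoints `s_{j_p}`, `t_{j_p}` of the
intervals indexed by the increasing enumeration of J. -/
theorem stmt16 {B : Type*} [BooleanAlgebra B] (s t : ℕ → B) (η : ℕ → B × B)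
    (hst : ∀ p, s p ≤ t p)
    (hη0 : η 0 = (s 0, t 0))
    (hηs : ∀ p, η (p + 1) =
      ijoin (η p) (idelta (ijoin (η p) (s (p + 1), t (p + 1))) (s (p + 1), t (p + 1)))) :
    ∀ i, η i =
      (s 0 ⊓ (Finset.Icc 1 i).inf (fun p => s p ⊔ (t p)ᶜ),
       t 0 ⊔ (Finset.Icc 1 i).sup (fun p => (s p)ᶜ ⊓ t p)) := by
  intro i
  induction i with
  | zero => simpa using hη0
  | succ i ih =>
    set A := s 0 ⊓ (Finset.Icc 1 i).inf (fun p => s p ⊔ (t p)ᶜ) with hA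
    set T := t 0 ⊔ (Finset.Icc 1 i).sup (fun p => (s p)ᶜ ⊓ t p) with hT
    have hAT : A ≤ T := le_trans (le_trans inf_le_left (hst 0)) le_sup_left
    have hIcc : Finset.Icc 1 (i + 1) = insert (i + 1) (Finset.Icc 1 i) :=
      (Finset.insert_Icc_right_eq_Icc_add_one (Nat.succ_le_succ (Nat.zero_le i))).symm
    rw [hηs i, ih, ijoin, idelta, ijoin]
    simp only [hIcc, Finset.inf_insert, Finset.sup_insert]
    refine Prod.ext ?_ ?_
    · show A ⊓ ((A ⊓ s (i+1)) ⊔ ((T ⊔ t (i+1)) ⊓ (t (i+1))ᶜ)) = _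
      rw [aux1 hAT]
      simp [hA, inf_comm, inf_assoc, inf_left_comm]
    · show T ⊔ ((T ⊔ t (i+1)) ⊓ ((A ⊓ s (i+1)) ⊔ (s (i+1))ᶜ)) = _
      rw [aux2 hAT]
      simp [hT, sup_comm, sup_assoc, sup_left_comm]
end
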